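/- Let γ be the unique root of 6γ³ − 18γ² + 9γ − 1 = 0 in the interval (1/6, 1/2), and set c_2 = (1+γ)/2, b_2 = (6γ² − 20γ + 5)/4, b_1 = 1 − γ − b_2, b_3 = γ. Then the three-stage stiff-accurate SDIRK scheme with A = [[γ,0,0],[c_2−γ, γ, 0],[b_1, b_2, γ]], b = (b_1, b_2, b_3), c = (γ, c_2, 1) satisfies all classical order-3 conditions: Σ b_i = 1, Σ b_i c_i = 1/2, Σ b_i c_i² = 1/3, Σ_{i,j} b_i a_{ij} c_j = 1/6. -/

import Mathlib

open Matrix BigOperators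

theorem stmt5_general (γ : ℝ)
    (hroot : 6 * γ ^ 3 - 18 * γ ^ 2 + 9 * γ - 1 = 0) :
    let c2 : ℝ := (1 + γ) / 2
    let b2 : ℝ := (6 * γ ^ 2 - 20 * γ + 5) / 4
    let b1 : ℝ := 1 - γ - b2
    let A : Matrix (Fin 3) (Fin 3) ℝ := !![γ, 0, 0; c2 - γ, γ, 0; b1, b2, γ]
    let b : Fin 3 → ℝ := ![b1, b2, γ]
    let c : Fin 3 → ℝ := ![γ, c2, 1]
    (∑ i, b i = 1) ∧ (∑ i, b i * c i = 1 / 2) ∧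
    (∑ i, b i * c i ^ 2 = 1 / 3) ∧
    (∑ i, ∑ j, b i * A i j * c j = 1 / 6) := by
  intro c2 b2 b1 A b c
  simp only [Fin.sum_univ_three, c2, b2, b1, A, b, c, of_apply, cons_val', cons_val_zero,
    cons_val_one, cons_val_two, empty_val', cons_val_fin_one, head_cons, head_fin_const, tail_cons]
  -- Expanded, each condition differs from a polynomial identity in γ by a multiple of the cubic.
  exact ⟨by ring, by linear_combination (-1 / 8 : ℝ) * hroot,
    by linear_combination (-3 / 16 * γ + 1 / 48) * hroot,
    by linear_combination (-3 / 8 * γ + 1 / 6) * hroot⟩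

/-- Alexander's three-stage stiff-accurate SDIRK3 scheme satisfies all classical
order-3 conditions. -/
theorem stmt5 (γ : ℝ) (hγ : γ ∈ Set.Ioo (1 / 6 : ℝ) (1 / 2))
    (hroot : 6 * γ ^ 3 - 18 * γ ^ 2 + 9 * γ - 1 = 0) :
    let c2 : ℝ := (1 + γ) / 2
    let b2 : ℝ := (6 * γ ^ 2 - 20 * γ + 5) / 4
    let b1 : ℝ := 1 - γ - b2
    let A : Matrix (Fin 3) (Fin 3) ℝ := !![γ, 0, 0; c2 - γ, γ, 0; b1, b2, γ]
    let b : Fin 3 → ℝ := ![b1, b2, γ]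
    let c : Fin 3 → ℝ := ![γ, c2, 1]
    (∑ i, b i = 1) ∧ (∑ i, b i * c i = 1 / 2) ∧
    (∑ i, b i * c i ^ 2 = 1 / 3) ∧
    (∑ i, ∑ j, b i * A i j * c j = 1 / 6) :=
  stmt5_general γ hroot
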